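/- Let A ⊆ [0,1) × [0,1] and B ⊆ (0,1] × [0,1] be disjoint closed sets. Then there exists a path in [0,1]² \ (A ∪ B) starting at a point of (0,1) × {0} and ending at a point of (0,1) × {1}. -/

import Mathlib

open Set
namespace MazeWalk
inductive Dir | E | N | W | S
deriving DecidableEq
instance : Fintype Dir := ⟨{Dir.E, Dir.N, Dir.W, Dir.S}, fun x => by cases x <;> simp⟩
open Dir
def Dir.vec : Dir → ℤ × ℤ
  | E => (1, 0) | N => (0, 1) | W => (-1, 0) | S => (0, -1)
def Dir.left : Dir → Dir
  | E => N | N => W | W => S | S => E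
def Dir.right : Dir → Dir
  | E => S | S => W | W => N | N => E
def Dir.off : Dir → ℤ × ℤ
  | E => (0, 0) | N => (-1, 0) | W => (-1, -1) | S => (0, -1)
def lcell (v : ℤ × ℤ) (d : Dir) : ℤ × ℤ := v + d.off
def rcell (v : ℤ × ℤ) (d : Dir) : ℤ × ℤ := lcell v d.right
set_option linter.unreachableTactic false
set_option linter.unusedTactic false
lemma I1 (v : ℤ × ℤ) (d : Dir) : lcell v d - d.left.vec = rcell v d := by
  cases d <;> simp [lcell, rcell, Dir.off, Dir.left, Dir.right, Dir.vec, Prod.ext_iff] <;> omega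
lemma lcell_add (v u : ℤ × ℤ) (d : Dir) : lcell (v + u) d = lcell v d + u := by
  cases d <;> simp [lcell, Prod.ext_iff] <;> omega
lemma rcell_add (v u : ℤ × ℤ) (d : Dir) : rcell (v + u) d = rcell v d + u := by
  cases d <;> simp [rcell, lcell, Prod.ext_iff, Dir.right] <;> omega
lemma E1 (v : ℤ × ℤ) (d : Dir) :
    rcell (v + d.vec) d.right - d.right.vec = lcell v d := by
  cases d <;> simp [lcell, rcell, Dir.off, Dir.left, Dir.right, Dir.vec, Prod.ext_iff] <;> omega
lemma E2 (v : ℤ × ℤ) (d : Dir) : rcell (v + d.vec) d.right = rcell v d := by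
  cases d <;> simp [lcell, rcell, Dir.off, Dir.right, Dir.vec, Prod.ext_iff] <;> omega
lemma E3 (v : ℤ × ℤ) (d : Dir) : lcell (v + d.vec) d.right = rcell v d + d.vec := by
  cases d <;> simp [lcell, rcell, Dir.off, Dir.right, Dir.vec, Prod.ext_iff] <;> omega
lemma E4 (v : ℤ × ℤ) (d : Dir) : lcell (v + d.vec) d.left = lcell v d := by
  cases d <;> simp [lcell, Dir.off, Dir.left, Dir.vec, Prod.ext_iff] <;> omega
lemma E5 (v : ℤ × ℤ) (d : Dir) : rcell (v + d.vec) d.left = lcell v d + d.vec := by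
  cases d <;> simp [lcell, rcell, Dir.off, Dir.left, Dir.right, Dir.vec, Prod.ext_iff] <;> omega
lemma lr (d : Dir) : d.right.left = d := by cases d <;> rfl
lemma rl (d : Dir) : d.left.right = d := by cases d <;> rfl

variable (st : ℤ × ℤ → Prop)

def valid (s : (ℤ × ℤ) × Dir) : Prop := st (lcell s.1 s.2) ∧ ¬ st (rcell s.1 s.2)

open Classical in
noncomputable def step (s : (ℤ × ℤ) × Dir) : (ℤ × ℤ) × Dir :=
  if st (rcell s.1 s.2 + s.2.vec) then (s.1 + s.2.vec, s.2.right)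
  else if st (lcell s.1 s.2 + s.2.vec) then (s.1 + s.2.vec, s.2)
  else (s.1 + s.2.vec, s.2.left)

lemma valid_step {s} (hv : valid st s) : valid st (step st s) := by
  obtain ⟨v, d⟩ := s
  obtain ⟨h1, h2⟩ := hv
  unfold step
  split_ifs with hr hs
  · exact ⟨by rwa [E3], by rwa [E2]⟩
  · exact ⟨by rwa [lcell_add], by rwa [rcell_add]⟩
  · exact ⟨by rwa [E4], by rwa [E5]⟩

/-- Characterization of the predecessor of a state `(w, e)`. -/
lemma step_cases {s : (ℤ × ℤ) × Dir} (hv : valid st s) {w : ℤ × ℤ} {e : Dir}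
    (h : step st s = (w, e)) :
    (s = (w - e.vec, e) ∧ st (lcell w e - e.vec) ∧ ¬ st (rcell w e - e.vec)
        ∧ ¬ st (rcell w e) ∧ st (lcell w e)) ∨
    (s = (w - e.left.vec, e.left) ∧ st (rcell w e - e.vec) ∧ ¬ st (rcell w e)
        ∧ st (lcell w e)) ∨
    (s = (w - e.right.vec, e.right) ∧ st (lcell w e) ∧ ¬ st (lcell w e - e.vec)
        ∧ ¬ st (rcell w e - e.vec) ∧ ¬ st (rcell w e)) := by
  obtain ⟨v, d⟩ := s
  obtain ⟨h1, h2⟩ := hv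
  unfold step at h
  split_ifs at h with hr hs
  · -- right turn: e = d.right, w = v + d.vec
    cases h
    right; left
    refine ⟨?_, ?_, ?_, ?_⟩
    · rw [lr]; simp
    · rw [E1]; exact h1
    · rw [E2]; exact h2
    · rw [E3]; exact hr
  · -- straight
    cases h
    left
    refine ⟨by simp, ?_, ?_, ?_, ?_⟩
    · rw [lcell_add]; simpa using h1
    · rw [rcell_add]; simpa using h2
    · rw [rcell_add]; simpa using hr
    · rw [lcell_add]; simpa using hs
  · -- left turn
    cases h
    right; right
    refine ⟨?_, ?_, ?_, ?_, ?_⟩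
    · rw [rl]; simp
    · rw [E4]; exact h1
    · rw [E4, I1]; exact h2
    · rw [E5]
      have : lcell v d + d.vec - d.left.vec = rcell v d + d.vec := by
        rw [← I1 v d]; abel
      rw [this]; exact hr
    · rw [E5]; exact hs

lemma step_inj {s s'} (hs : valid st s) (hs' : valid st s')
    (h : step st s = step st s') : s = s' := by
  set w := (step st s).1
  set e := (step st s).2
  have hcs := step_cases st hs (w := w) (e := e) rfl
  have hcs' := step_cases st hs' (w := w) (e := e) (by rw [← h])
  rcases hcs with ⟨e1, c1, c2, c3, c4⟩ | ⟨e1, c1, c2, c3⟩ | ⟨e1, c1, c2, c3, c4⟩ <;>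
    rcases hcs' with ⟨e2, d1, d2, d3, d4⟩ | ⟨e2, d1, d2, d3⟩ | ⟨e2, d1, d2, d3, d4⟩ <;>
      first
        | (exact absurd d1 c2)
        | (exact absurd c1 d2)
        | (exact absurd d1 c3)
        | (exact absurd c2 d2)
        | (exact absurd d2 c1)
        | (exact absurd c1 d3)
        | (exact absurd d1 c4)
        | (rw [e1, e2])

/-- start state -/
def d0 : (ℤ × ℤ) × Dir := ((0, 0), Dir.E)

noncomputable def orb : ℕ → (ℤ × ℤ) × Dir := fun n => (step st)^[n] (d0)

lemma orb_zero : orb st 0 = d0 := rfl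

lemma orb_succ (n : ℕ) : orb st (n + 1) = step st (orb st n) := by
  simp [orb, Function.iterate_succ_apply']

open Classical in
noncomputable def tmid (s : (ℤ × ℤ) × Dir) : ℤ × ℤ :=
  if st (rcell s.1 s.2 + s.2.vec) then rcell s.1 s.2 else rcell s.1 s.2 + s.2.vec

open Classical in
noncomputable def tc (m : ℕ) : ℤ × ℤ :=
  if m % 2 = 0 then rcell (orb st (m / 2)).1 (orb st (m / 2)).2
  else tmid st (orb st (m / 2))

lemma tc_even (k : ℕ) : tc st (2 * k) = rcell (orb st k).1 (orb st k).2 := by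
  have h1 : (2 * k) % 2 = 0 := by omega
  have h2 : (2 * k) / 2 = k := by omega
  simp [tc, h1, h2]

lemma tc_odd (k : ℕ) : tc st (2 * k + 1) = tmid st (orb st k) := by
  have h1 : (2 * k + 1) % 2 = 1 := by omega
  have h2 : (2 * k + 1) / 2 = k := by omega
  simp [tc, h1, h2]

lemma vec_bd (d : Dir) : -1 ≤ (d.vec).1 ∧ (d.vec).1 ≤ 1 ∧ -1 ≤ (d.vec).2 ∧ (d.vec).2 ≤ 1 := by
  cases d <;> simp [Dir.vec] <;> omega

lemma vecdiff_bd (d : Dir) : -1 ≤ (d.vec).1 - (d.left.vec).1 ∧ (d.vec).1 - (d.left.vec).1 ≤ 1 ∧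
    -1 ≤ (d.vec).2 - (d.left.vec).2 ∧ (d.vec).2 - (d.left.vec).2 ≤ 1 := by
  cases d <;> simp [Dir.vec, Dir.left] <;> omega

lemma I1' (v : ℤ × ℤ) (d : Dir) :
    (rcell v d).1 = (lcell v d).1 - (d.left.vec).1 ∧
    (rcell v d).2 = (lcell v d).2 - (d.left.vec).2 := by
  constructor
  · rw [← I1]; rfl
  · rw [← I1]; rfl

section Grid

variable {st}
variable {N : ℤ}
variable (hgrid : ∀ p, st p → 0 ≤ p.1 ∧ p.1 < N ∧ 0 ≤ p.2 ∧ p.2 < N)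
variable (hleft : ∀ j : ℤ, 0 ≤ j → j < N → st (0, j))
variable (hright : ∀ j : ℤ, ¬ st (N - 1, j))
variable (hN : 2 ≤ N)

include hgrid hleft hN in
lemma valid_d0 : valid st (d0) := by
  constructor
  · have : lcell (d0).1 (d0).2 = (0, 0) := rfl
    rw [this]; exact hleft 0 le_rfl (by omega)
  · intro h
    have h2 := hgrid _ h
    have e : rcell (d0 : (ℤ × ℤ) × Dir).1 (d0 : (ℤ × ℤ) × Dir).2 = ((0 : ℤ), (-1 : ℤ)) := rfl
    rw [e] at h2
    simp at h2

include hgrid hleft hN in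
lemma orb_valid (n : ℕ) : valid st (orb st n) := by
  induction n with
  | zero => exact valid_d0 hgrid hleft hN
  | succ n ih => rw [orb_succ]; exact valid_step st ih

include hgrid hleft hN in
lemma tc_not_st (m : ℕ) : ¬ st (tc st m) := by
  obtain ⟨k, hk | hk⟩ := Nat.even_or_odd' m <;> subst hk
  · rw [tc_even]; exact (orb_valid hgrid hleft hN k).2
  · rw [tc_odd]
    unfold tmid
    split_ifs with h
    · exact (orb_valid hgrid hleft hN k).2
    · exact h

include hgrid hleft hN in
lemma tc_touch (m : ℕ) : ∃ p, st p ∧ p.1 - 1 ≤ (tc st m).1 ∧ (tc st m).1 ≤ p.1 + 1 ∧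
    p.2 - 1 ≤ (tc st m).2 ∧ (tc st m).2 ≤ p.2 + 1 := by
  obtain ⟨k, hk | hk⟩ := Nat.even_or_odd' m <;> subst hk
  · rw [tc_even]
    obtain ⟨hL, hR⟩ := orb_valid hgrid hleft hN k
    set s := orb st k with hs
    obtain ⟨e1, e2⟩ := I1' s.1 s.2
    have hb := vec_bd (s.2.left)
    exact ⟨lcell s.1 s.2, hL, by omega, by omega, by omega, by omega⟩
  · rw [tc_odd]
    obtain ⟨hL, hR⟩ := orb_valid hgrid hleft hN k
    set s := orb st k with hs
    unfold tmid
    obtain ⟨e1, e2⟩ := I1' s.1 s.2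
    have hb := vec_bd (s.2.left)
    have hd := vecdiff_bd s.2
    have hadd1 : (rcell s.1 s.2 + s.2.vec).1 = (rcell s.1 s.2).1 + (s.2.vec).1 := rfl
    have hadd2 : (rcell s.1 s.2 + s.2.vec).2 = (rcell s.1 s.2).2 + (s.2.vec).2 := rfl
    split_ifs with h
    · exact ⟨lcell s.1 s.2, hL, by omega, by omega, by omega, by omega⟩
    · exact ⟨lcell s.1 s.2, hL, by omega, by omega, by omega, by omega⟩

lemma tc_adj (m : ℕ) : tc st (m + 1) = tc st m ∨ ∃ u : Dir, tc st (m + 1) = tc st m + u.vec := by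
  obtain ⟨k, hk | hk⟩ := Nat.even_or_odd' m <;> subst hk
  · rw [tc_even, tc_odd]
    unfold tmid
    split_ifs with h
    · exact Or.inl rfl
    · exact Or.inr ⟨(orb st k).2, rfl⟩
  · have e2 : 2 * k + 1 + 1 = 2 * (k + 1) := by ring
    rw [e2, tc_even, tc_odd, orb_succ]
    set s := orb st k with hs
    unfold tmid step
    split_ifs with h1 h2
    · left; exact E2 s.1 s.2
    · left; rw [rcell_add]
    · right
      refine ⟨s.2.left, ?_⟩
      rw [E5]
      have := I1 s.1 s.2
      have : lcell s.1 s.2 = rcell s.1 s.2 + s.2.left.vec := by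
        rw [← this]; abel
      rw [this]; abel

include hgrid hleft hright hN in
lemma tc_enter (m : ℕ) (h1 : (tc st (m + 1)).1 = -1) (h2 : (tc st m).1 = 0) :
    (tc st m).2 = N := by
  obtain ⟨k, hk | hk⟩ := Nat.even_or_odd' m <;> subst hk
  · rw [tc_even] at h2 ⊢
    rw [tc_odd] at h1
    obtain ⟨hL, hR⟩ := orb_valid hgrid hleft hN k
    unfold tmid at h1
    set s := orb st k with hs
    clear_value s
    obtain ⟨⟨v1, v2⟩, d⟩ := s
    have hGL := hgrid _ hL
    split_ifs at h1 with hcond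
    · omega
    · cases d <;>
        simp only [rcell, lcell, Dir.right, Dir.off, Dir.vec, Prod.mk_add_mk,
          Prod.fst, Prod.snd] at h1 h2 hL hR hGL hcond ⊢ <;>
        try omega
      -- remaining: W case
      by_contra hne
      refine hR ?_
      rw [show ((v1 + -1 : ℤ), (v2 + 0 : ℤ)) = ((0 : ℤ), v2) by
        rw [Prod.mk.injEq]; omega]
      exact hleft _ (by omega) (by omega)
  · exfalso
    have e2 : 2 * k + 1 + 1 = 2 * (k + 1) := by ring
    rw [e2, tc_even, orb_succ] at h1
    rw [tc_odd] at h2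
    obtain ⟨hL, hR⟩ := orb_valid hgrid hleft hN k
    unfold tmid at h2
    unfold step at h1
    set s := orb st k with hs
    clear_value s
    obtain ⟨⟨v1, v2⟩, d⟩ := s
    have hGL := hgrid _ hL
    split_ifs at h1 h2 with hc1 hc2 <;>
      cases d <;>
        simp only [rcell, lcell, Dir.right, Dir.left, Dir.off, Dir.vec, Prod.mk_add_mk,
          Prod.fst, Prod.snd] at h1 h2 hL hR hGL hc1 ⊢ <;>
        omega

include hgrid in
lemma valid_finite : {s : (ℤ × ℤ) × Dir | valid st s}.Finite := by
  apply Set.Finite.of_finite_image (f := fun s => (lcell s.1 s.2, s.2))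
  · apply Set.Finite.subset
      ((((Set.finite_Icc (0:ℤ) (N-1)).prod (Set.finite_Icc (0:ℤ) (N-1))).prod
        (Set.finite_univ (α := Dir))))
    rintro ⟨c, d⟩ ⟨s, hvs, heq⟩
    obtain ⟨e1, e2⟩ := Prod.mk.injEq .. ▸ heq
    have hb := hgrid _ hvs.1
    constructor
    · simp only [← e1]
      exact ⟨⟨by omega, by omega⟩, ⟨by omega, by omega⟩⟩
    · trivial
  · rintro s hs s' hs' heq
    simp only [Prod.mk.injEq] at heq
    obtain ⟨e1, e2⟩ := heq
    have : s.1 = s'.1 := by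
      have h1 : lcell s.1 s.2 = s.1 + s.2.off := rfl
      have h2 : lcell s'.1 s'.2 = s'.1 + s'.2.off := rfl
      rw [h1, h2, e2] at e1
      exact add_right_cancel e1
    exact Prod.ext this e2

include hgrid hleft hN in
lemma orbit_cycle (k : ℕ) : ∀ l, k < l → orb st k = orb st l →
    ∃ m, step st (orb st m) = d0 := by
  induction k with
  | zero =>
    intro l hl heq
    obtain ⟨l', rfl⟩ : ∃ l', l = l' + 1 := ⟨l - 1, by omega⟩
    exact ⟨l', by rw [← orb_succ, ← heq, orb_zero]⟩
  | succ k ih =>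
    intro l hl heq
    obtain ⟨l', rfl⟩ : ∃ l', l = l' + 1 := ⟨l - 1, by omega⟩
    rw [orb_succ, orb_succ] at heq
    have := step_inj st (orb_valid hgrid hleft hN k) (orb_valid hgrid hleft hN l') heq
    exact ih l' (by omega) this

include hgrid hleft hN in
lemma exists_step_d0 : ∃ m, step st (orb st m) = d0 := by
  have hfin := valid_finite hgrid
  have hmt : Set.MapsTo (orb st) Set.univ {s | valid st s} :=
    fun n _ => orb_valid hgrid hleft hN n
  obtain ⟨k, -, l, -, hne, heq⟩ :=
    Set.infinite_univ.exists_ne_map_eq_of_mapsTo hmt hfin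
  rcases hne.lt_or_gt with h | h
  · exact orbit_cycle hgrid hleft hN k l h heq
  · exact orbit_cycle hgrid hleft hN l k h heq.symm

include hgrid hleft hN in
lemma exists_neg_col : ∃ n, (tc st n).1 = -1 := by
  obtain ⟨m, hm⟩ := exists_step_d0 hgrid hleft hN
  have hv := orb_valid hgrid hleft hN m
  have hm' : step st (orb st m) = (((0 : ℤ), (0 : ℤ)), Dir.E) := hm
  have hc := step_cases st hv hm'
  have c1 : lcell ((0 : ℤ), (0 : ℤ)) Dir.E - Dir.E.vec = ((-1 : ℤ), (0 : ℤ)) := by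
    simp [lcell, Dir.off, Dir.vec, Prod.ext_iff]
  have c2 : rcell ((0 : ℤ), (0 : ℤ)) Dir.E - Dir.E.vec = ((-1 : ℤ), (-1 : ℤ)) := by
    simp [rcell, lcell, Dir.right, Dir.off, Dir.vec, Prod.ext_iff]
  rcases hc with ⟨-, hst, -⟩ | ⟨-, hst, -⟩ | ⟨he, -⟩
  · rw [c1] at hst; have := hgrid _ hst; simp at this
  · rw [c2] at hst; have := hgrid _ hst; simp at this
  · refine ⟨2 * m, ?_⟩
    rw [tc_even, he]
    simp [rcell, lcell, Dir.right, Dir.off, Dir.vec]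

include hgrid hleft hright hN in
lemma neg_then_top (n0 : ℕ) (hn0 : (tc st n0).1 = -1) : ∃ n' < n0, (tc st n').2 = N := by
  have hne : ∃ n, (tc st n).1 = -1 := ⟨n0, hn0⟩
  have hspec : (tc st (Nat.find hne)).1 = -1 := Nat.find_spec hne
  have htc0 : tc st 0 = ((0 : ℤ), (-1 : ℤ)) := by
    have : tc st 0 = rcell (orb st 0).1 (orb st 0).2 := tc_even st 0
    rw [this, orb_zero]
    simp [d0, rcell, lcell, Dir.right, Dir.off, Prod.ext_iff]
  rcases Nat.eq_zero_or_pos (Nat.find hne) with h0 | hpos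
  · rw [h0, htc0] at hspec; simp at hspec
  obtain ⟨m', hm'⟩ : ∃ m', Nat.find hne = m' + 1 := ⟨Nat.find hne - 1, by omega⟩
  rw [hm'] at hspec
  have hmin : ¬ (tc st m').1 = -1 := Nat.find_min hne (by omega)
  have hlt : m' < n0 := by
    have := Nat.find_min' hne hn0
    omega
  refine ⟨m', hlt, ?_⟩
  have hadj := tc_adj (st := st) m'
  rcases hadj with heq | ⟨u, hu⟩
  · rw [heq] at hspec; exact absurd hspec hmin
  · have hcoord : (tc st (m' + 1)).1 = (tc st m').1 + (u.vec).1 := by rw [hu]; simp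
    have hb := vec_bd u
    have hlow : -1 ≤ (tc st m').1 := by
      obtain ⟨p, hp, h1, h2, h3, h4⟩ := tc_touch hgrid hleft hN m'
      have := hgrid _ hp
      omega
    have h0' : (tc st m').1 = 0 := by omega
    exact tc_enter hgrid hleft hright hN m' hspec h0'

include hgrid hleft hN in
lemma tc_zero : tc st 0 = ((0 : ℤ), (-1 : ℤ)) := by
  have : tc st 0 = rcell (orb st 0).1 (orb st 0).2 := tc_even st 0
  rw [this, orb_zero]
  simp [d0, rcell, lcell, Dir.right, Dir.off, Prod.ext_iff]

include hgrid hright hleft hN in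
lemma tc_range (k : ℕ) : -1 ≤ (tc st k).1 ∧ (tc st k).1 ≤ N - 1 ∧
    -1 ≤ (tc st k).2 ∧ (tc st k).2 ≤ N := by
  obtain ⟨p, hp, h1, h2, h3, h4⟩ := tc_touch hgrid hleft hN k
  have hb := hgrid _ hp
  refine ⟨by omega, ?_, by omega, by omega⟩
  by_contra hcon
  have hp1 : p.1 = N - 1 := by omega
  have : p = (N - 1, p.2) := Prod.ext hp1 rfl
  rw [this] at hp
  exact hright _ hp

open Classical in
include hgrid hleft hright hN in
lemma maze_main :
    ∃ (L : ℕ) (c : ℕ → ℤ × ℤ),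
      (∀ m, m ≤ L → ¬ st (c m) ∧ 0 ≤ (c m).1 ∧ (c m).1 < N ∧ 0 ≤ (c m).2 ∧ (c m).2 < N ∧
        ∃ p, st p ∧ p.1 - 1 ≤ (c m).1 ∧ (c m).1 ≤ p.1 + 1 ∧
          p.2 - 1 ≤ (c m).2 ∧ (c m).2 ≤ p.2 + 1) ∧
      (∀ m, m < L → c (m + 1) = c m ∨ ∃ u : Dir, c (m + 1) = c m + u.vec) ∧
      (c 0).2 = 0 ∧ (c L).2 = N - 1 := by
  have htc0 := tc_zero hgrid hleft hN
  obtain ⟨n0, hn0⟩ := exists_neg_col hgrid hleft hN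
  obtain ⟨nt, -, hnt⟩ := neg_then_top hgrid hleft hright hN n0 hn0
  have htop : ∃ n, (tc st n).2 = N := ⟨nt, hnt⟩
  have htb : (tc st (Nat.find htop)).2 = N := Nat.find_spec htop
  set b := Nat.find htop with hbdef
  have hbm : ∀ k, k < b → (tc st k).2 ≠ N := fun k hk => Nat.find_min htop hk
  have hb0 : 0 < b := by
    rcases Nat.eq_zero_or_pos b with h | h
    · rw [h, htc0] at htb; simp at htb; omega
    · exact h
  -- no cell with first coordinate -1 before b
  have hneg : ∀ k, k < b → (tc st k).1 ≠ -1 := by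
    intro k hk hcon
    obtain ⟨n', hn', htopn⟩ := neg_then_top hgrid hleft hright hN k hcon
    exact hbm n' (by omega) htopn
  have ha0 : (tc st 0).2 = -1 := by rw [htc0]
  set a := Nat.findGreatest (fun m => (tc st m).2 = -1) (b - 1) with hadef
  have ha_spec : (tc st a).2 = -1 :=
    Nat.findGreatest_spec (P := fun m => (tc st m).2 = -1) (m := 0) (by omega) ha0
  have ha_le : a ≤ b - 1 := Nat.findGreatest_le _
  have ha_max : ∀ k, a < k → k ≤ b - 1 → (tc st k).2 ≠ -1 := by
    intro k h1 h2
    exact Nat.findGreatest_is_greatest (P := fun m => (tc st m).2 = -1) h1 h2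
  have hvb := fun (u : Dir) => vec_bd u
  have hab : a + 2 ≤ b := by
    by_contra hcon
    have hae : a = b - 1 := by omega
    have hadj := tc_adj (st := st) a
    rcases hadj with heq | ⟨u, hu⟩
    · rw [show a + 1 = b by omega] at heq
      rw [heq] at htb; omega
    · rw [show a + 1 = b by omega] at hu
      have : (tc st b).2 = (tc st a).2 + (u.vec).2 := by rw [hu]; simp
      have := vec_bd u
      omega
  -- the cells strictly between a and b are in the grid
  have hcells : ∀ k, a + 1 ≤ k → k ≤ b - 1 → ¬ st (tc st k) ∧
      0 ≤ (tc st k).1 ∧ (tc st k).1 < N ∧ 0 ≤ (tc st k).2 ∧ (tc st k).2 < N := by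
    intro k h1 h2
    have hr := tc_range hgrid hleft hright hN k
    have hn1 : (tc st k).1 ≠ -1 := hneg k (by omega)
    have hn2 : (tc st k).2 ≠ -1 := ha_max k (by omega) h2
    have hn3 : (tc st k).2 ≠ N := hbm k (by omega)
    exact ⟨tc_not_st hgrid hleft hN k, by omega, by omega, by omega, by omega⟩
  refine ⟨b - 1 - (a + 1), fun m => tc st (a + 1 + m), ?_, ?_, ?_, ?_⟩
  · intro m hm
    have h1 : a + 1 ≤ a + 1 + m := by omega
    have h2 : a + 1 + m ≤ b - 1 := by omega
    obtain ⟨hns, hb1, hb2, hb3, hb4⟩ := hcells _ h1 h2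
    obtain ⟨p, hp, ht1, ht2, ht3, ht4⟩ := tc_touch hgrid hleft hN (a + 1 + m)
    exact ⟨hns, hb1, hb2, hb3, hb4, p, hp, ht1, ht2, ht3, ht4⟩
  · intro m hm
    have := tc_adj (st := st) (a + 1 + m)
    rw [show a + 1 + m + 1 = a + 1 + (m + 1) by omega] at this
    exact this
  · -- bottom row
    have hadj := tc_adj (st := st) a
    have hin := hcells (a + 1) (by omega) (by omega)
    show (tc st (a + 1)).2 = 0
    rcases hadj with heq | ⟨u, hu⟩
    · have : (tc st (a + 1)).2 = (tc st a).2 := by rw [heq]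
      omega
    · have hc : (tc st (a + 1)).2 = (tc st a).2 + (u.vec).2 := by rw [hu]; simp
      have := vec_bd u
      omega
  · -- top row
    have hadj := tc_adj (st := st) (b - 1)
    rw [show b - 1 + 1 = b by omega] at hadj
    have hin := hcells (b - 1) (by omega) (by omega)
    show (tc st (a + 1 + (b - 1 - (a + 1)))).2 = N - 1
    rw [show a + 1 + (b - 1 - (a + 1)) = b - 1 by omega]
    rcases hadj with heq | ⟨u, hu⟩
    · have : (tc st b).2 = (tc st (b - 1)).2 := by rw [heq]
      have hn3 : (tc st (b - 1)).2 ≠ N := hbm (b - 1) (by omega)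
      omega
    · have hc : (tc st b).2 = (tc st (b - 1)).2 + (u.vec).2 := by rw [hu]; simp
      have := vec_bd u
      have hn3 : (tc st (b - 1)).2 ≠ N := hbm (b - 1) (by omega)
      omega

end Grid

end MazeWalk

lemma interval_dist {Nr a b x y : ℝ} (hN : 0 < Nr) (hx1 : a/Nr ≤ x) (hx2 : x ≤ (a+1)/Nr)
    (hy1 : b/Nr ≤ y) (hy2 : y ≤ (b+1)/Nr) (h1 : a - 1 ≤ b) (h2 : b ≤ a + 1) :
    |x - y| ≤ 2/Nr := by
  have key : ∀ s t : ℝ, s ≤ t → s / Nr ≤ t / Nr := fun s t h => (div_le_div_iff_of_pos_right hN).2 h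
  rw [abs_le]
  constructor
  · have hk := key (-2) (a - (b+1)) (by linarith)
    have e : (a - (b+1))/Nr = a / Nr - (b+1)/Nr := sub_div a (b+1) Nr
    have e2 : (-2:ℝ)/Nr = -(2/Nr) := neg_div Nr 2
    linarith
  · have hk := key ((a+1) - b) 2 (by linarith)
    have e : ((a+1) - b)/Nr = (a+1) / Nr - b/Nr := sub_div (a+1) b Nr
    linarith

open MazeWalk in
theorem path_through_square_avoiding_closed_sets
    (A B : Set (ℝ × ℝ))
    (hA : IsClosed A) (hB : IsClosed B) (hAB : Disjoint A B)
    (hAsub : A ⊆ (Ico (0:ℝ) 1) ×ˢ (Icc (0:ℝ) 1))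
    (hBsub : B ⊆ (Ioc (0:ℝ) 1) ×ˢ (Icc (0:ℝ) 1)) :
    ∃ p q : ℝ × ℝ, p ∈ (Ioo (0:ℝ) 1) ×ˢ ({0} : Set ℝ) ∧
      q ∈ (Ioo (0:ℝ) 1) ×ˢ ({1} : Set ℝ) ∧
      JoinedIn ((Icc (0:ℝ) 1 ×ˢ Icc (0:ℝ) 1) \ (A ∪ B)) p q := by
  classical
  set S : Set (ℝ × ℝ) := (Icc (0:ℝ) 1 ×ˢ Icc (0:ℝ) 1) \ (A ∪ B) with hSdef
  set A' : Set (ℝ × ℝ) := A ∪ ({(0:ℝ)} ×ˢ Icc (0:ℝ) 1) with hA'def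
  set B' : Set (ℝ × ℝ) := B ∪ ({(1:ℝ)} ×ˢ Icc (0:ℝ) 1) with hB'def
  have hSqc : IsCompact (Icc (0:ℝ) 1 ×ˢ Icc (0:ℝ) 1) := isCompact_Icc.prod isCompact_Icc
  have hAc : IsCompact A := hSqc.of_isClosed_subset hA
    (hAsub.trans (Set.prod_mono Ico_subset_Icc_self subset_rfl))
  have hA'c : IsCompact A' := hAc.union (isCompact_singleton.prod isCompact_Icc)
  have hB'cl : IsClosed B' := hB.union (isClosed_singleton.prod isClosed_Icc)
  have hdis : Disjoint A' B' := by
    rw [Set.disjoint_left]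
    rintro p (hpA | hpL) (hpB | hpR)
    · exact Set.disjoint_left.mp hAB hpA hpB
    · exact absurd (hAsub hpA).1.2 (by rw [hpR.1]; simp)
    · exact absurd (hBsub hpB).1.1 (by rw [hpL.1]; simp)
    · exact absurd hpR.1 (by rw [hpL.1]; norm_num)
  obtain ⟨δ, hδ, hthick⟩ := hdis.exists_thickenings hA'c hB'cl
  have hsep : ∀ p ∈ A', ∀ q ∈ B', δ ≤ dist p q := by
    intro p hp q hq
    by_contra hcon
    push_neg at hcon
    have h1 : q ∈ Metric.thickening δ A' :=
      Metric.mem_thickening_iff.2 ⟨p, hp, by rwa [dist_comm]⟩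
    exact Set.disjoint_left.mp hthick h1 (Metric.self_subset_thickening hδ _ hq)
  obtain ⟨n, hn⟩ := exists_nat_gt (2 / δ)
  set N : ℕ := n + 2 with hNdef
  have hN0 : (0:ℝ) < N := by positivity
  have h2N : 2 / (N:ℝ) < δ := by
    rw [div_lt_iff₀ hN0]
    rw [div_lt_iff₀ hδ] at hn
    have : (n:ℝ) ≤ N := by exact_mod_cast Nat.le_add_right n 2
    nlinarith
  set cell : ℤ × ℤ → Set (ℝ × ℝ) := fun p =>
    Icc ((p.1 : ℝ)/N) (((p.1 : ℝ)+1)/N) ×ˢ Icc ((p.2 : ℝ)/N) (((p.2 : ℝ)+1)/N) with hcelldef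
  set st : ℤ × ℤ → Prop := fun p =>
    0 ≤ p.1 ∧ p.1 < (N:ℤ) ∧ 0 ≤ p.2 ∧ p.2 < (N:ℤ) ∧ (cell p ∩ A').Nonempty with hstdef
  -- distance bound between points of nearby cells
  have hdistcell : ∀ (u w : ℤ × ℤ) (x y : ℝ × ℝ), x ∈ cell u → y ∈ cell w →
      u.1 - 1 ≤ w.1 → w.1 ≤ u.1 + 1 → u.2 - 1 ≤ w.2 → w.2 ≤ u.2 + 1 →
      dist x y ≤ 2 / (N:ℝ) := by
    intro u w x y hx hy h1 h2 h3 h4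
    obtain ⟨⟨hx11, hx12⟩, hx21, hx22⟩ := hx
    obtain ⟨⟨hy11, hy12⟩, hy21, hy22⟩ := hy
    have c1 : ((w.1 : ℝ)) ≤ (u.1 : ℝ) + 1 := by exact_mod_cast h2
    have c2 : ((u.1 : ℝ)) - 1 ≤ (w.1 : ℝ) := by exact_mod_cast h1
    have c3 : ((w.2 : ℝ)) ≤ (u.2 : ℝ) + 1 := by exact_mod_cast h4
    have c4 : ((u.2 : ℝ)) - 1 ≤ (w.2 : ℝ) := by exact_mod_cast h3
    rw [Prod.dist_eq]
    apply max_le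
    · rw [Real.dist_eq]
      exact interval_dist hN0 hx11 hx12 hy11 hy12 (by linarith) (by linarith)
    · rw [Real.dist_eq]
      exact interval_dist hN0 hx21 hx22 hy21 hy22 (by linarith) (by linarith)
  have hNZ2 : (2:ℤ) ≤ (N:ℤ) := by simp [hNdef]
  have hgrid : ∀ p, st p → 0 ≤ p.1 ∧ p.1 < (N:ℤ) ∧ 0 ≤ p.2 ∧ p.2 < (N:ℤ) :=
    fun p hp => ⟨hp.1, hp.2.1, hp.2.2.1, hp.2.2.2.1⟩
  have hdivle : ∀ s t : ℝ, s ≤ t → s / (N:ℝ) ≤ t / (N:ℝ) :=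
    fun s t h => (div_le_div_iff_of_pos_right hN0).2 h
  have hleft : ∀ j : ℤ, 0 ≤ j → j < (N:ℤ) → st (0, j) := by
    intro j h1 h2
    have hjr1 : (0:ℝ) ≤ (j:ℝ) := by exact_mod_cast h1
    have hjr2 : (j:ℝ) + 1 ≤ (N:ℝ) := by exact_mod_cast h2
    refine ⟨le_rfl, by omega, h1, h2, ⟨((0:ℝ), (j:ℝ)/N), ⟨?_, ?_⟩, ?_⟩⟩
    · constructor
      · norm_num
      · norm_num
    · exact ⟨le_rfl, hdivle _ _ (by norm_num)⟩
    · exact Or.inr ⟨rfl, div_nonneg hjr1 hN0.le, (div_le_one hN0).2 (by linarith)⟩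
  have hright : ∀ j : ℤ, ¬ st ((N:ℤ) - 1, j) := by
    intro j hstp
    obtain ⟨x, hxc, hxA⟩ := hstp.2.2.2.2
    have hj1 : (0:ℤ) ≤ j := hstp.2.2.1
    have hj2 : j < (N:ℤ) := hstp.2.2.2.1
    have hjr1 : (0:ℝ) ≤ (j:ℝ) := by exact_mod_cast hj1
    have hjr2 : (j:ℝ) + 1 ≤ (N:ℝ) := by exact_mod_cast hj2
    have hyc : ((1:ℝ), (j:ℝ)/N) ∈ cell ((N:ℤ)-1, j) := by
      refine ⟨⟨?_, ?_⟩, le_rfl, hdivle _ _ (by norm_num)⟩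
      · show ((((N:ℤ) - 1 : ℤ) : ℝ))/N ≤ 1
        push_cast
        rw [div_le_one (by positivity)]
        linarith
      · show (1:ℝ) ≤ ((((N:ℤ) - 1 : ℤ) : ℝ) + 1)/N
        push_cast
        rw [le_div_iff₀ (by positivity)]
        linarith
    have hyB : ((1:ℝ), (j:ℝ)/N) ∈ B' :=
      Or.inr ⟨rfl, div_nonneg hjr1 hN0.le, (div_le_one hN0).2 (by linarith)⟩
    have hd := hdistcell _ _ x ((1:ℝ), (j:ℝ)/N) hxc hyc (by omega) (by omega) (by omega) (by omega)
    have := hsep x hxA _ hyB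
    linarith
  obtain ⟨L, c, hcard, hadjc, hc0, hcL⟩ :=
    MazeWalk.maze_main (st := st) (N := (N:ℤ)) hgrid hleft hright hNZ2
  set ctr : ℤ × ℤ → ℝ × ℝ :=
    fun p => ((p.1:ℝ)/N + 1/(2*N), (p.2:ℝ)/N + 1/(2*N)) with hctrdef
  have hhalfpos : (0:ℝ) < 1/(2*N) := by positivity
  have hhalfle : (1:ℝ)/(2*N) ≤ 1/N := by
    rw [div_le_div_iff₀ (by positivity) hN0]
    linarith
  have hctrcell : ∀ p : ℤ × ℤ, ctr p ∈ cell p := by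
    intro p
    have e1 : ((p.1:ℝ)+1)/N = (p.1:ℝ)/N + 1/N := add_div _ _ _
    have e2 : ((p.2:ℝ)+1)/N = (p.2:ℝ)/N + 1/N := add_div _ _ _
    exact ⟨⟨by linarith, by rw [e1]; linarith⟩, by linarith, by rw [e2]; linarith⟩
  have hcellS : ∀ m, m ≤ L → cell (c m) ⊆ S := by
    intro m hm z hz
    obtain ⟨hns, hb1, hb2, hb3, hb4, p, hp, ht1, ht2, ht3, ht4⟩ := hcard m hm
    have hcr1 : (0:ℝ) ≤ ((c m).1 : ℝ) := by exact_mod_cast hb1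
    have hcr2 : ((c m).1:ℝ) + 1 ≤ (N:ℝ) := by exact_mod_cast hb2
    have hcr3 : (0:ℝ) ≤ ((c m).2 : ℝ) := by exact_mod_cast hb3
    have hcr4 : ((c m).2:ℝ) + 1 ≤ (N:ℝ) := by exact_mod_cast hb4
    obtain ⟨⟨hz11, hz12⟩, hz21, hz22⟩ := hz
    constructor
    · exact ⟨⟨le_trans (div_nonneg hcr1 hN0.le) hz11,
        le_trans hz12 ((div_le_one hN0).2 hcr2)⟩,
        le_trans (div_nonneg hcr3 hN0.le) hz21,
        le_trans hz22 ((div_le_one hN0).2 hcr4)⟩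
    · rintro (hzA | hzB)
      · exact hns ⟨hb1, hb2, hb3, hb4,
          ⟨z, ⟨⟨hz11, hz12⟩, hz21, hz22⟩, Or.inl hzA⟩⟩
      · obtain ⟨x, hxc, hxA⟩ := hp.2.2.2.2
        have hd := hdistcell p (c m) x z hxc ⟨⟨hz11, hz12⟩, hz21, hz22⟩
          (by omega) (by omega) (by omega) (by omega)
        have := hsep x hxA z (Or.inl hzB)
        linarith
  -- joining centers of adjacent cells
  have hjoinH : ∀ u w : ℤ × ℤ, w.1 = u.1 + 1 → w.2 = u.2 →
      cell u ⊆ S → cell w ⊆ S → JoinedIn S (ctr u) (ctr w) := by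
    intro u w he1 he2 hu hw
    have hw1 : ((w.1:ℝ)) = (u.1:ℝ) + 1 := by exact_mod_cast he1
    have hw2 : ((w.2:ℝ)) = (u.2:ℝ) := by exact_mod_cast he2
    have hcw : cell w =
        Icc (((u.1:ℝ)+1)/N) (((u.1:ℝ)+2)/N) ×ˢ Icc ((u.2:ℝ)/N) (((u.2:ℝ)+1)/N) := by
      rw [hcelldef]
      simp only
      rw [hw1, hw2, show ((u.1:ℝ)+1+1) = (u.1:ℝ)+2 from by ring]
    have hRu : Icc ((u.1:ℝ)/N) (((u.1:ℝ)+2)/N) ×ˢ Icc ((u.2:ℝ)/N) (((u.2:ℝ)+1)/N)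
        = cell u ∪ cell w := by
      rw [hcw, hcelldef]
      simp only
      rw [← Set.union_prod]
      rw [Set.Icc_union_Icc_eq_Icc (hdivle _ _ (by linarith)) (hdivle _ _ (by linarith))]
    have hRS : Icc ((u.1:ℝ)/N) (((u.1:ℝ)+2)/N) ×ˢ Icc ((u.2:ℝ)/N) (((u.2:ℝ)+1)/N) ⊆ S := by
      rw [hRu]; exact Set.union_subset hu hw
    have hconv : Convex ℝ (Icc ((u.1:ℝ)/N) (((u.1:ℝ)+2)/N) ×ˢ
        Icc ((u.2:ℝ)/N) (((u.2:ℝ)+1)/N)) := (convex_Icc _ _).prod (convex_Icc _ _)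
    have hmu : ctr u ∈ Icc ((u.1:ℝ)/N) (((u.1:ℝ)+2)/N) ×ˢ
        Icc ((u.2:ℝ)/N) (((u.2:ℝ)+1)/N) := by
      rw [hRu]; exact Set.mem_union_left _ (hctrcell u)
    have hmw : ctr w ∈ Icc ((u.1:ℝ)/N) (((u.1:ℝ)+2)/N) ×ˢ
        Icc ((u.2:ℝ)/N) (((u.2:ℝ)+1)/N) := by
      rw [hRu]; exact Set.mem_union_right _ (hctrcell w)
    exact ((hconv.isPathConnected ⟨ctr u, hmu⟩).joinedIn _ hmu _ hmw).mono hRS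
  have hjoinV : ∀ u w : ℤ × ℤ, w.1 = u.1 → w.2 = u.2 + 1 →
      cell u ⊆ S → cell w ⊆ S → JoinedIn S (ctr u) (ctr w) := by
    intro u w he1 he2 hu hw
    have hw1 : ((w.1:ℝ)) = (u.1:ℝ) := by exact_mod_cast he1
    have hw2 : ((w.2:ℝ)) = (u.2:ℝ) + 1 := by exact_mod_cast he2
    have hcw : cell w =
        Icc ((u.1:ℝ)/N) (((u.1:ℝ)+1)/N) ×ˢ Icc (((u.2:ℝ)+1)/N) (((u.2:ℝ)+2)/N) := by
      rw [hcelldef]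
      simp only
      rw [hw1, hw2, show ((u.2:ℝ)+1+1) = (u.2:ℝ)+2 from by ring]
    have hRu : Icc ((u.1:ℝ)/N) (((u.1:ℝ)+1)/N) ×ˢ Icc ((u.2:ℝ)/N) (((u.2:ℝ)+2)/N)
        = cell u ∪ cell w := by
      rw [hcw, hcelldef]
      simp only
      rw [← Set.prod_union]
      rw [Set.Icc_union_Icc_eq_Icc (hdivle _ _ (by linarith)) (hdivle _ _ (by linarith))]
    have hRS : Icc ((u.1:ℝ)/N) (((u.1:ℝ)+1)/N) ×ˢ Icc ((u.2:ℝ)/N) (((u.2:ℝ)+2)/N) ⊆ S := by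
      rw [hRu]; exact Set.union_subset hu hw
    have hconv : Convex ℝ (Icc ((u.1:ℝ)/N) (((u.1:ℝ)+1)/N) ×ˢ
        Icc ((u.2:ℝ)/N) (((u.2:ℝ)+2)/N)) := (convex_Icc _ _).prod (convex_Icc _ _)
    have hmu : ctr u ∈ Icc ((u.1:ℝ)/N) (((u.1:ℝ)+1)/N) ×ˢ
        Icc ((u.2:ℝ)/N) (((u.2:ℝ)+2)/N) := by
      rw [hRu]; exact Set.mem_union_left _ (hctrcell u)
    have hmw : ctr w ∈ Icc ((u.1:ℝ)/N) (((u.1:ℝ)+1)/N) ×ˢ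
        Icc ((u.2:ℝ)/N) (((u.2:ℝ)+2)/N) := by
      rw [hRu]; exact Set.mem_union_right _ (hctrcell w)
    exact ((hconv.isPathConnected ⟨ctr u, hmu⟩).joinedIn _ hmu _ hmw).mono hRS
  have hstep : ∀ m, m < L → JoinedIn S (ctr (c m)) (ctr (c (m+1))) := by
    intro m hm
    have hu := hcellS m (le_of_lt hm)
    have hw := hcellS (m+1) hm
    rcases hadjc m hm with heq | ⟨u, hu'⟩
    · rw [heq]
      exact JoinedIn.refl (hu (hctrcell (c m)))
    · cases u
      · -- E
        refine hjoinH (c m) (c (m+1)) ?_ ?_ hu hw <;>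
          (rw [hu']; simp [MazeWalk.Dir.vec])
      · -- N
        refine hjoinV (c m) (c (m+1)) ?_ ?_ hu hw <;>
          (rw [hu']; simp [MazeWalk.Dir.vec])
      · -- W
        refine (hjoinH (c (m+1)) (c m) ?_ ?_ hw hu).symm <;>
          (rw [hu']; simp [MazeWalk.Dir.vec])
      · -- S
        refine (hjoinV (c (m+1)) (c m) ?_ ?_ hw hu).symm <;>
          (rw [hu']; simp [MazeWalk.Dir.vec])
  have hchain : ∀ m, m ≤ L → JoinedIn S (ctr (c 0)) (ctr (c m)) := by
    intro m
    induction m with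
    | zero => intro _; exact JoinedIn.refl (hcellS 0 (Nat.zero_le L) (hctrcell (c 0)))
    | succ m ih => intro hm; exact (ih (by omega)).trans (hstep m (by omega))
  -- endpoints
  obtain ⟨-, hb01, hb02, -, -⟩ := hcard 0 (Nat.zero_le L)
  obtain ⟨-, hbL1, hbL2, -, -⟩ := hcard L le_rfl
  have hcr01 : (0:ℝ) ≤ ((c 0).1 : ℝ) := by exact_mod_cast hb01
  have hcr02 : ((c 0).1:ℝ) + 1 ≤ (N:ℝ) := by exact_mod_cast hb02
  have hcrL1 : (0:ℝ) ≤ ((c L).1 : ℝ) := by exact_mod_cast hbL1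
  have hcrL2 : ((c L).1:ℝ) + 1 ≤ (N:ℝ) := by exact_mod_cast hbL2
  have hy0 : ((c 0).2 : ℝ) = 0 := by exact_mod_cast hc0
  have hyL : ((c L).2 : ℝ) = (N:ℝ) - 1 := by
    have : ((c L).2 : ℝ) = (((N:ℤ) - 1 : ℤ) : ℝ) := by exact_mod_cast hcL
    rw [this]; push_cast; ring
  set pstart : ℝ × ℝ := (((c 0).1:ℝ)/N + 1/(2*N), 0) with hpdef
  set qend : ℝ × ℝ := (((c L).1:ℝ)/N + 1/(2*N), 1) with hqdef
  have hpcell : pstart ∈ cell (c 0) := by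
    refine ⟨⟨by linarith, ?_⟩, ?_, ?_⟩
    · rw [add_div]; exact add_le_add le_rfl hhalfle
    · show ((c 0).2:ℝ)/N ≤ 0
      rw [hy0]; norm_num
    · show (0:ℝ) ≤ (((c 0).2:ℝ) + 1)/N
      rw [hy0]; positivity
  have hqcell : qend ∈ cell (c L) := by
    refine ⟨⟨by linarith, ?_⟩, ?_, ?_⟩
    · rw [add_div]; exact add_le_add le_rfl hhalfle
    · show ((c L).2:ℝ)/N ≤ 1
      rw [hyL, div_le_one hN0]; linarith
    · show (1:ℝ) ≤ (((c L).2:ℝ) + 1)/N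
      rw [hyL, show ((N:ℝ) - 1) + 1 = (N:ℝ) from by ring, div_self hN0.ne']
  have hconv0 : Convex ℝ (cell (c 0)) := by
    rw [hcelldef]; exact (convex_Icc _ _).prod (convex_Icc _ _)
  have hconvL : Convex ℝ (cell (c L)) := by
    rw [hcelldef]; exact (convex_Icc _ _).prod (convex_Icc _ _)
  have jstart : JoinedIn S pstart (ctr (c 0)) :=
    ((hconv0.isPathConnected ⟨pstart, hpcell⟩).joinedIn _ hpcell _ (hctrcell _)).mono
      (hcellS 0 (Nat.zero_le L))
  have jend : JoinedIn S (ctr (c L)) qend :=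
    ((hconvL.isPathConnected ⟨qend, hqcell⟩).joinedIn _ (hctrcell _) _ hqcell).mono
      (hcellS L le_rfl)
  have hxkey : ∀ t : ℝ, 0 ≤ t → t + 1 ≤ (N:ℝ) → t/N + 1/(2*N) ∈ Ioo (0:ℝ) 1 := by
    intro t ht1 ht2
    constructor
    · have := div_nonneg ht1 hN0.le
      linarith
    · have key : ((N:ℝ)-1)/N + 1/N = 1 := by field_simp; ring
      have hmono := hdivle t ((N:ℝ)-1) (by linarith)
      have hstrict : (1:ℝ)/(2*N) < 1/N := by
        rw [div_lt_div_iff₀ (by positivity) hN0]; linarith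
      linarith
  exact ⟨pstart, qend, ⟨hxkey _ hcr01 hcr02, rfl⟩, ⟨hxkey _ hcrL1 hcrL2, rfl⟩,
    jstart.trans ((hchain L le_rfl).trans jend)⟩
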